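/- arXiv:1306.1542 — 7 statements merged into one kernel-verified Lean document; each statement's English description precedes it below -/
import Mathlib

section
/- Let ρ be a unitary representation of F₂ on a normed vector space E, let w ∈ F₂ be a nontrivial cyclically reduced word of word length |w|, and let e ∈ E. Then the Brooks map H = H_{w,e} satisfies H(g⁻¹) = −ρ(g⁻¹)H(g) for all g ∈ F₂, and its defect satisfies Δ(H) := sup_{g,g'} ‖H(gg') − H(g) − ρ(g)H(g')‖ ≤ 6·|w|·‖e‖; in particular H is a quasi-cocycle. -/
open scoped BigOperators

abbrev F2 : Type := FreeGroup Bool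

abbrev fa : F2 := FreeGroup.of true
abbrev fb : F2 := FreeGroup.of false

def IsQuasiCocycle {G E : Type*} [Group G] [NormedAddCommGroup E] [NormedSpace ℝ E]
    (ρ : G →* (E ≃ₗᵢ[ℝ] E)) (H : G → E) : Prop :=
  ∃ C : ℝ, ∀ g g' : G, ‖H (g * g') - H g - ρ g (H g')‖ ≤ C

def IsCocycle {G E : Type*} [Group G] [NormedAddCommGroup E] [NormedSpace ℝ E]
    (ρ : G →* (E ≃ₗᵢ[ℝ] E)) (F : G → E) : Prop :=
  ∀ g g' : G, F (g * g') = F g + ρ g (F g')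

def IsCyclicallyReduced (w : F2) : Prop :=
  FreeGroup.reduce (w.toWord ++ w.toWord) = w.toWord ++ w.toWord

def IsRankTwoFree (F : Subgroup F2) : Prop :=
  ∃ x y : F2, Subgroup.closure {x, y} = F ∧
    Function.Injective (FreeGroup.lift (fun t : Bool => if t then x else y))

noncomputable def brooks {E : Type*} [NormedAddCommGroup E] [NormedSpace ℝ E]
    (ρ : F2 →* (E ≃ₗᵢ[ℝ] E)) (w : F2) (e : E) (g : F2) : E :=
  (∑ i ∈ Finset.range g.toWord.length,
      if (g.toWord.drop i).take w.toWord.length = w.toWord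
      then ρ (FreeGroup.mk (g.toWord.take i)) e else 0)
  - ∑ j ∈ Finset.range g.toWord.length,
      if (g.toWord.drop j).take w.toWord.length = w⁻¹.toWord
      then ρ (FreeGroup.mk (g.toWord.take (j + w.toWord.length))) e else 0

/-! Since the Brooks map only sees the reduced word of `g`, it is the composite of `toWord` with
a map on words built from two occurrence sums. Reversing a word exchanges the occurrences of `w`
and of `w⁻¹`, which gives the antisymmetry. Concatenating two words changes an occurrence sum only
through the at most `|w|` occurrences that straddle the junction. Finally, reduced words of `x`
and `y` can be written `p c` and `c⁻¹ q` with `p q` the reduced word of `x y`, and the defect at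
`(x, y)` is then a combination of the concatenation defects at `(p, q)`, `(p, c)` and `(c⁻¹, q)`,
each at most `2 |w| ‖e‖`. -/

theorem List.take_drop_ne_of_length_lt {β : Type*} {k i : ℕ} {u L : List β}
    (hu : u.length = k) (hi : i < L.length) (h : L.length < i + k) : (L.drop i).take k ≠ u := by
  intro hEq
  apply_fun List.length at hEq
  simp only [List.length_take, List.length_drop, hu] at hEq
  omega

namespace FreeGroup

open List

variable {α : Type*}

theorem take_drop_invRev (L : List (α × Bool)) {k i : ℕ} (h : i + k ≤ L.length) :
    ((invRev L).drop (L.length - k - i)).take k = invRev ((L.drop i).take k) := by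
  have h₁ : L.length - (L.length - k - i) = k + i := by omega
  have h₂ : min (k + i) L.length - k = i := by omega
  simp only [invRev, map_take, map_drop, drop_reverse, length_map, h₁, take_reverse,
    length_take, h₂, drop_take, Nat.add_sub_cancel]

theorem take_invRev (L : List (α × Bool)) (m : ℕ) :
    (invRev L).take m = invRev (L.drop (L.length - m)) := by
  simp only [invRev, take_reverse, length_map, map_drop]

theorem mk_invRev_drop (L : List (α × Bool)) (m : ℕ) :
    mk (invRev (L.drop m)) = (mk L)⁻¹ * mk (L.take m) := by
  have h : mk (L.take m) * mk (L.drop m) = mk L := by rw [mul_mk, take_append_drop]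
  rw [← inv_mk, ← h, mul_inv_rev, mul_assoc, inv_mul_cancel, mul_one]

variable [DecidableEq α]

theorem exists_reduce_append_eq {L₁ L₂ : List (α × Bool)} (h₁ : IsReduced L₁)
    (h₂ : IsReduced L₂) :
    ∃ p c q, L₁ = p ++ c ∧ L₂ = invRev c ++ q ∧ reduce (L₁ ++ L₂) = p ++ q := by
  induction L₁ using List.reverseRecOn generalizing L₂ with
  | nil => exact ⟨[], [], L₂, rfl, rfl, h₂.reduce_eq⟩
  | append_singleton L₁ x ih =>
    rcases L₂ with _ | ⟨y, t⟩
    · exact ⟨L₁ ++ [x], [], [], by simp, rfl, by simpa using h₁.reduce_eq⟩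
    by_cases hxy : y = (x.1, !x.2)
    · obtain ⟨p, c, q, rfl, rfl, hr⟩ :=
        ih (h₁.infix (prefix_append _ _).isInfix) (h₂.infix (suffix_cons _ _).isInfix)
      refine ⟨p, c ++ [x], q, by simp, by simp [hxy, invRev], ?_⟩
      have hstep :
          Red.Step (p ++ c ++ [x] ++ y :: (invRev c ++ q)) (p ++ c ++ (invRev c ++ q)) := by
        simpa [hxy] using Red.Step.not (L₁ := p ++ c) (L₂ := invRev c ++ q) (x := x.1) (b := x.2)
      rw [reduce.Step.eq hstep, hr]
    · refine ⟨L₁ ++ [x], [], y :: t, by simp, rfl, IsReduced.reduce_eq ?_⟩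
      have hxy' : x.1 = y.1 → x.2 = y.2 := by
        obtain ⟨x₁, x₂⟩ := x; obtain ⟨y₁, y₂⟩ := y
        rintro rfl
        cases x₂ <;> cases y₂ <;> simp_all
      simpa using h₁.append_overlap (isReduced_cons_cons.2 ⟨hxy', h₂⟩) (cons_ne_nil _ _)

end FreeGroup

section OccurrenceSum

open FreeGroup Finset

variable {α : Type*} [DecidableEq α] {E : Type*} [NormedAddCommGroup E] [NormedSpace ℝ E]
  (ρ : FreeGroup α →* (E ≃ₗᵢ[ℝ] E)) (e : E)

/-- With `a = 0` the prefix `L.take (i + a)` ends just before the occurrence of `u` at `i`, with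
`a = k` just after it: these are the two sums of the Brooks map. -/
noncomputable def occurrenceSum (k a : ℕ) (u L : List (α × Bool)) : E :=
  ∑ i ∈ range L.length, if (L.drop i).take k = u then ρ (mk (L.take (i + a))) e else 0

variable {ρ e} {k a : ℕ} {u : List (α × Bool)}

theorem occurrenceSum_eq_sum_range (hu : u.length = k) (hk : 1 ≤ k) (L : List (α × Bool)) :
    occurrenceSum ρ e k a u L = ∑ i ∈ range (L.length + 1 - k),
      if (L.drop i).take k = u then ρ (mk (L.take (i + a))) e else 0 := by
  refine (sum_subset (range_subset_range.mpr (by omega)) fun i hi hi' => ?_).symm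
  rw [mem_range] at hi hi'
  exact if_neg (List.take_drop_ne_of_length_lt hu hi (by omega))

/-- Reading `invRev L` forwards is reading `L` backwards, so an occurrence of `u` in `invRev L`
is an occurrence of `invRev u` in `L`, and a prefix ending `a` letters into the former corresponds
to one ending `b = k - a` letters into the latter. -/
theorem occurrenceSum_invRev (hu : u.length = k) (hk : 1 ≤ k) {b : ℕ} (hab : a + b = k)
    (L : List (α × Bool)) :
    occurrenceSum ρ e k a u (invRev L) = ρ (mk L)⁻¹ (occurrenceSum ρ e k b (invRev u) L) := by
  have hu' : (invRev u).length = k := by rw [invRev_length, hu]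
  rw [occurrenceSum_eq_sum_range hu hk, occurrenceSum_eq_sum_range hu' hk, invRev_length,
    map_sum, ← sum_range_reflect]
  refine sum_congr rfl fun i hi => ?_
  rw [mem_range] at hi
  have hik : i + k ≤ L.length := by omega
  have hidx : L.length + 1 - k - 1 - i = L.length - k - i := by omega
  have hwindow : ((invRev L).drop (L.length - k - i)).take k = u ↔
      (L.drop i).take k = invRev u := by
    rw [take_drop_invRev L hik, ← invRev_injective.eq_iff, invRev_invRev]
  have hprefix : (invRev L).take (L.length - k - i + a) = invRev (L.drop (i + b)) := by
    rw [take_invRev, show L.length - (L.length - k - i + a) = i + b by omega]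
  rw [hidx, apply_ite (ρ (mk L)⁻¹), map_zero, hprefix, mk_invRev_drop, _root_.map_mul,
    LinearIsometryEquiv.coe_mul, Function.comp_apply]
  exact if_congr hwindow rfl rfl

theorem occurrenceSum_append (A B : List (α × Bool)) :
    occurrenceSum ρ e k a u (A ++ B) = (∑ i ∈ range A.length,
        if ((A ++ B).drop i).take k = u then ρ (mk ((A ++ B).take (i + a))) e else 0)
      + ρ (mk A) (occurrenceSum ρ e k a u B) := by
  rw [occurrenceSum, List.length_append, sum_range_add, occurrenceSum, map_sum]
  congr 1
  refine sum_congr rfl fun i _ => ?_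
  rw [List.drop_length_add_append, add_assoc, List.take_length_add_append, ← mul_mk, _root_.map_mul,
    LinearIsometryEquiv.coe_mul, Function.comp_apply, apply_ite (ρ (mk A)), map_zero]

theorem norm_occurrenceSum_append_sub_le (hu : u.length = k) (ha : a ≤ k)
    (A B : List (α × Bool)) :
    ‖occurrenceSum ρ e k a u (A ++ B) - occurrenceSum ρ e k a u A
        - ρ (mk A) (occurrenceSum ρ e k a u B)‖ ≤ k * ‖e‖ := by
  set f : List (α × Bool) → ℕ → E := fun L i =>
    if (L.drop i).take k = u then ρ (mk (L.take (i + a))) e else 0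
  have hinner : ∀ i, i + k ≤ A.length → f (A ++ B) i - f A i = 0 := fun i hi => by
    simp only [f, List.drop_append_of_le_length (by omega : i ≤ A.length),
      List.take_append_of_le_length (by simp; omega : k ≤ (A.drop i).length),
      List.take_append_of_le_length (by omega : i + a ≤ A.length), sub_self]
  have hjunction : ∀ i ∈ Ico (A.length - k) A.length, ‖f (A ++ B) i - f A i‖ ≤ ‖e‖ := by
    intro i hi
    rw [mem_Ico] at hi
    by_cases hik : i + k ≤ A.length
    · simp [hinner i hik]
    simp only [f, if_neg (List.take_drop_ne_of_length_lt hu hi.2 (by omega))]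
    split_ifs <;> simp
  have hsplit := sum_range_add_sum_Ico (fun i => f (A ++ B) i - f A i) (Nat.sub_le A.length k)
  rw [sum_eq_zero fun i hi => hinner i (by rw [mem_range] at hi; omega), zero_add] at hsplit
  have hcancel : ∀ x y z : E, x + y - z - y = x - z := fun x y z => by abel
  rw [occurrenceSum_append, hcancel, occurrenceSum, ← sum_sub_distrib]
  change ‖∑ i ∈ range A.length, (f (A ++ B) i - f A i)‖ ≤ k * ‖e‖
  rw [← hsplit]
  calc _ ≤ ∑ _ ∈ Ico (A.length - k) A.length, ‖e‖ := norm_sum_le_of_le _ hjunction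
    _ ≤ k * ‖e‖ := by
      rw [sum_const, Nat.card_Ico, nsmul_eq_mul]
      gcongr
      exact_mod_cast (by omega : A.length - (A.length - k) ≤ k)

end OccurrenceSum

section QuasiCocycle

open FreeGroup

variable {α : Type*} [DecidableEq α] {E : Type*} [NormedAddCommGroup E] [NormedSpace ℝ E]
  (ρ : FreeGroup α →* (E ≃ₗᵢ[ℝ] E))

theorem norm_comp_toWord_mul_sub_le {h : List (α × Bool) → E} {C : ℝ}
    (hinv : ∀ L, h (invRev L) = -ρ (mk L)⁻¹ (h L))
    (hadd : ∀ A B, ‖h (A ++ B) - h A - ρ (mk A) (h B)‖ ≤ C) (x y : FreeGroup α) :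
    ‖h (x * y).toWord - h x.toWord - ρ x (h y.toWord)‖ ≤ 3 * C := by
  obtain ⟨p, c, q, hx, hy, hxy⟩ := exists_reduce_append_eq (isReduced_toWord (x := x))
    (isReduced_toWord (x := y))
  have hmk : x = mk p * mk c := by rw [mul_mk, ← hx, mk_toWord]
  have hcancel : ∀ v, ρ (mk c) (ρ (mk c)⁻¹ v) = v := fun v => by
    rw [_root_.map_inv, LinearIsometryEquiv.coe_inv, LinearIsometryEquiv.apply_symm_apply]
  set D := fun A B => h (A ++ B) - h A - ρ (mk A) (h B)
  have hdecomp : h (p ++ q) - h (p ++ c) - ρ (mk p * mk c) (h (invRev c ++ q))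
      = D p q - D p c - ρ (mk p * mk c) (D (invRev c) q) := by
    simp only [D, hinv c, ← inv_mk, _root_.map_mul, LinearIsometryEquiv.coe_mul,
      Function.comp_apply, map_sub, map_neg, hcancel]
    abel
  rw [toWord_mul, hxy, hx, hy, hmk, hdecomp]
  have h₁ := norm_sub_le (D p q - D p c) (ρ (mk p * mk c) (D (invRev c) q))
  have h₂ := norm_sub_le (D p q) (D p c)
  rw [LinearIsometryEquiv.norm_map] at h₁
  linarith [hadd p q, hadd p c, hadd (invRev c) q]

variable (e : E)

noncomputable def brooksWord (u L : List (α × Bool)) : E :=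
  occurrenceSum ρ e u.length 0 u L - occurrenceSum ρ e u.length u.length (invRev u) L

variable {ρ e} {u : List (α × Bool)}

theorem brooksWord_invRev (hu : u ≠ []) (L : List (α × Bool)) :
    brooksWord ρ e u (invRev L) = -ρ (mk L)⁻¹ (brooksWord ρ e u L) := by
  have hk : 1 ≤ u.length := List.length_pos_iff.mpr hu
  have h₁ := occurrenceSum_invRev (ρ := ρ) (e := e) (a := 0) rfl hk (zero_add _) L
  have h₂ := occurrenceSum_invRev (ρ := ρ) (e := e) (u := invRev u) (a := u.length)
    invRev_length hk (add_zero _) L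
  rw [invRev_invRev] at h₂
  rw [brooksWord, brooksWord, h₁, h₂, ← map_sub, ← map_neg, neg_sub]

theorem norm_brooksWord_append_sub_le (A B : List (α × Bool)) :
    ‖brooksWord ρ e u (A ++ B) - brooksWord ρ e u A - ρ (mk A) (brooksWord ρ e u B)‖
      ≤ 2 * u.length * ‖e‖ := by
  have h₁ := norm_occurrenceSum_append_sub_le (ρ := ρ) (e := e) (u := u) (a := 0) rfl
    (Nat.zero_le _) A B
  have h₂ := norm_occurrenceSum_append_sub_le (ρ := ρ) (e := e) (u := invRev u) (a := u.length)
    invRev_length le_rfl A B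
  have hsplit : brooksWord ρ e u (A ++ B) - brooksWord ρ e u A - ρ (mk A) (brooksWord ρ e u B)
      = (occurrenceSum ρ e u.length 0 u (A ++ B) - occurrenceSum ρ e u.length 0 u A
          - ρ (mk A) (occurrenceSum ρ e u.length 0 u B))
        - (occurrenceSum ρ e u.length u.length (invRev u) (A ++ B)
          - occurrenceSum ρ e u.length u.length (invRev u) A
          - ρ (mk A) (occurrenceSum ρ e u.length u.length (invRev u) B)) := by
    simp only [brooksWord, map_sub]
    abel
  rw [hsplit]
  linarith [norm_sub_le_of_le h₁ h₂]

end QuasiCocycle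

theorem brooks_eq_brooksWord {E : Type*} [NormedAddCommGroup E] [NormedSpace ℝ E]
    (ρ : F2 →* (E ≃ₗᵢ[ℝ] E)) (w : F2) (e : E) (g : F2) :
    brooks ρ w e g = brooksWord ρ e w.toWord g.toWord := by
  simp only [brooks, brooksWord, occurrenceSum, FreeGroup.toWord_inv, add_zero]

theorem stmt1_general {E : Type*} [NormedAddCommGroup E] [NormedSpace ℝ E]
    (ρ : F2 →* (E ≃ₗᵢ[ℝ] E)) (w : F2) (hw : w ≠ 1)
    (e : E) :
    (∀ g : F2, brooks ρ w e g⁻¹ = - (ρ g⁻¹ (brooks ρ w e g))) ∧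
    (∀ g g' : F2,
      ‖brooks ρ w e (g * g') - brooks ρ w e g - ρ g (brooks ρ w e g')‖
        ≤ 6 * (w.toWord.length : ℝ) * ‖e‖) ∧
    IsQuasiCocycle ρ (brooks ρ w e) := by
  have hu : w.toWord ≠ [] := by rwa [Ne, FreeGroup.toWord_eq_nil_iff]
  have hdefect (g g' : F2) :
      ‖brooks ρ w e (g * g') - brooks ρ w e g - ρ g (brooks ρ w e g')‖
        ≤ 6 * (w.toWord.length : ℝ) * ‖e‖ := by
    simp only [brooks_eq_brooksWord]
    linarith [norm_comp_toWord_mul_sub_le ρ (brooksWord_invRev (e := e) hu)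
      norm_brooksWord_append_sub_le g g']
  refine ⟨fun g => ?_, hdefect, _, hdefect⟩
  rw [brooks_eq_brooksWord, brooks_eq_brooksWord, FreeGroup.toWord_inv, brooksWord_invRev hu,
    FreeGroup.mk_toWord]

/-- the Brooks map H_{w,e} for a nontrivial cyclically reduced word w
is anti-symmetric and has defect at most 6·|w|·‖e‖; in particular it is a
quasi-cocycle. -/
theorem stmt1 {E : Type*} [NormedAddCommGroup E] [NormedSpace ℝ E]
    (ρ : F2 →* (E ≃ₗᵢ[ℝ] E)) (w : F2) (hw : w ≠ 1) (hcr : IsCyclicallyReduced w)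
    (e : E) :
    (∀ g : F2, brooks ρ w e g⁻¹ = - (ρ g⁻¹ (brooks ρ w e g))) ∧
    (∀ g g' : F2,
      ‖brooks ρ w e (g * g') - brooks ρ w e g - ρ g (brooks ρ w e g')‖
        ≤ 6 * (w.toWord.length : ℝ) * ‖e‖) ∧
    IsQuasiCocycle ρ (brooks ρ w e) :=
  stmt1_general ρ w hw e
end

section
/- Let E be a uniformly convex real Banach space. For every R > 0 there exist ε > 0 and μ > 0 with the following property: if v ∈ E with ‖v‖ ≤ R, f : E → ℝ is a continuous linear functional with ‖f‖ = 1 and f(v) = ‖v‖, and e ∈ E is a vector with ‖e‖ ≥ 1/2 and f(e) ≥ −μ, then ‖v + e‖ ≥ ‖v‖ + ε. -/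
open scoped BigOperators

/-!
Rescale by `M = ‖v‖ + ε`: if `‖v + e‖ < M`, then `v` and `v + e` lie in the ball of radius `M`
at distance `‖e‖ ≥ 1/2`, which is a definite fraction of `M ≤ R + 1`. Uniform convexity then
gives `‖2v + e‖ ≤ (2 - δ) M`, while `f(2v + e) ≥ 2‖v‖ - μ`; for `‖v‖` bounded below this is
impossible once `ε, μ ≪ δ`. For small `‖v‖` the triangle inequality and `‖e‖ ≥ 1/2` suffice.
-/

theorem exists_forall_closed_ball_dist_add_le_two_sub_mul (E : Type*) [SeminormedAddCommGroup E]
    [NormedSpace ℝ E] [UniformConvexSpace E] {ε : ℝ} (hε : 0 < ε) :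
    ∃ δ, 0 < δ ∧ ∀ ⦃r : ℝ⦄, 0 < r → ∀ ⦃x y : E⦄, ‖x‖ ≤ r → ‖y‖ ≤ r → ε * r ≤ ‖x - y‖ →
      ‖x + y‖ ≤ (2 - δ) * r := by
  obtain ⟨δ, hδ, h⟩ := exists_forall_closed_ball_dist_add_le_two_sub E hε
  refine ⟨δ, hδ, fun r hr x y hx hy hxy => ?_⟩
  have norm_scale : ∀ z : E, ‖r⁻¹ • z‖ = ‖z‖ / r := fun z => by
    rw [norm_smul_of_nonneg (inv_nonneg.2 hr.le), inv_mul_eq_div]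
  have hx' : ‖r⁻¹ • x‖ ≤ 1 := by rwa [norm_scale, div_le_one hr]
  have hy' : ‖r⁻¹ • y‖ ≤ 1 := by rwa [norm_scale, div_le_one hr]
  have hxy' : ε ≤ ‖r⁻¹ • x - r⁻¹ • y‖ := by rwa [← smul_sub, norm_scale, le_div_iff₀ hr]
  have := h hx' hy' hxy'
  rwa [← smul_add, norm_scale, div_le_iff₀ hr] at this

theorem stmt2_general {E : Type*} [NormedAddCommGroup E] [NormedSpace ℝ E]
    [UniformConvexSpace E] (R : ℝ) (hR : 0 < R) :
    ∃ ε > (0:ℝ), ∃ μ > (0:ℝ), ∀ (v : E) (f : E →L[ℝ] ℝ) (e : E),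
      ‖v‖ ≤ R → ‖f‖ = 1 → f v = ‖v‖ → 1/2 ≤ ‖e‖ → -μ ≤ f e →
      ‖v‖ + ε ≤ ‖v + e‖ := by
  obtain ⟨δ, hδ, huc⟩ :=
    exists_forall_closed_ball_dist_add_le_two_sub_mul E (ε := 1 / (2 * (R + 1))) (by positivity)
  refine ⟨min (1/4) (δ/32), by positivity, δ/32, by positivity, fun v f e hvR hf hfv he hfe => ?_⟩
  set ε := min (1/4) (δ/32)
  have hε4 : ε ≤ 1/4 := min_le_left _ _
  have hεδ : ε ≤ δ/32 := min_le_right _ _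
  have htriangle : ‖e‖ ≤ ‖v + e‖ + ‖v‖ := by simpa using norm_sub_le (v + e) v
  rcases le_or_gt ‖v‖ (1/8) with hv | hv
  · linarith
  by_contra! hlt
  have hM : 0 < ‖v‖ + ε := by positivity
  have hsep : 1 / (2 * (R + 1)) * (‖v‖ + ε) ≤ ‖v - (v + e)‖ := by
    rw [sub_add_cancel_left, norm_neg]
    calc 1 / (2 * (R + 1)) * (‖v‖ + ε) ≤ 1 / (2 * (R + 1)) * (R + 1) :=
          mul_le_mul_of_nonneg_left (by linarith) (by positivity)
      _ = 1 / 2 := by field_simp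
      _ ≤ ‖e‖ := he
  have hconv := huc hM (le_add_of_nonneg_right (by positivity)) hlt.le hsep
  have hf_le : f (v + (v + e)) ≤ ‖v + (v + e)‖ :=
    (Real.le_norm_self _).trans (by simpa [hf] using f.le_opNorm (v + (v + e)))
  rw [map_add, map_add, hfv] at hf_le
  have hδv : δ / 8 < δ * ‖v‖ := by nlinarith
  have : 2 * ‖v‖ - δ / 32 ≤ (2 - δ) * (‖v‖ + ε) := by linarith
  nlinarith [mul_nonneg hδ.le (show 0 ≤ ε by positivity)]

/-- in a uniformly convex real Banach space, for every R > 0 there are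
ε > 0 and μ > 0 such that whenever ‖v‖ ≤ R, f is a norming functional for v of norm 1,
and e has ‖e‖ ≥ 1/2 and f(e) ≥ −μ, then ‖v + e‖ ≥ ‖v‖ + ε. -/
theorem stmt2 {E : Type*} [NormedAddCommGroup E] [NormedSpace ℝ E]
    [CompleteSpace E] [UniformConvexSpace E] (R : ℝ) (hR : 0 < R) :
    ∃ ε > (0:ℝ), ∃ μ > (0:ℝ), ∀ (v : E) (f : E →L[ℝ] ℝ) (e : E),
      ‖v‖ ≤ R → ‖f‖ = 1 → f v = ‖v‖ → 1/2 ≤ ‖e‖ → -μ ≤ f e →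
      ‖v‖ + ε ≤ ‖v + e‖ :=
  stmt2_general R hR
end

section
/- Let ρ be a unitary representation of F₂ = ⟨a,b⟩ on a uniformly convex real Banach space E (such a space is reflexive), and let G : F₂ → E be a cocycle whose restrictions to the subgroups ⟨a², b⟩ and ⟨a³, b⟩ are bounded. Then either G is bounded on all of F₂, or there exists a rank-two free subgroup F ≤ F₂ such that ρ restricted to F fixes some nonzero vector of E. -/
open scoped BigOperators

/-!
A nonempty bounded subset of a uniformly convex Banach space has a unique Chebyshev centre:
a minimizing sequence for the radius of the smallest enclosing ball is Cauchy, because the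
midpoint of two far-apart almost-minimizers would beat the infimum. For a subgroup `H` on which
the cocycle is bounded, the centre of `G '' H` is fixed by the affine isometries
`y ↦ ρ h y + G h`, which permute `G '' H`; so `G h = x_H - ρ h x_H` on `H`.
If the centres `x₂`, `x₃` for `⟨a², b⟩` and `⟨a³, b⟩` agree, this identity holds on the group
they generate, which contains `a = a³ a⁻²` and hence is `F₂`, so `G` is bounded. Otherwise
`x₂ - x₃ ≠ 0` is fixed by `ρ` on `⟨a², b⟩ ∩ ⟨a³, b⟩ ⊇ ⟨a⁶, b⟩`, and `⟨a⁶, b⟩` is free of rank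
two by ping-pong on the first letter of reduced words.
-/

open Bornology Filter Function Topology

section ChebyshevRadius

variable {X : Type*} [PseudoMetricSpace X] {S : Set X}

/-- The junk value `0` is taken when `S` is empty or unbounded. -/
noncomputable def chebyshevRadius (S : Set X) (x : X) : ℝ := sSup ((dist x ·) '' S)

theorem bddAbove_image_dist (hS : IsBounded S) (x : X) : BddAbove ((dist x ·) '' S) := by
  obtain ⟨r, hr⟩ := (Metric.isBounded_iff_subset_closedBall x).1 hS
  exact ⟨r, by rintro _ ⟨s, hs, rfl⟩; simpa [dist_comm] using hr hs⟩

theorem dist_le_chebyshevRadius (hS : IsBounded S) (x : X) {s : X} (hs : s ∈ S) :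
    dist x s ≤ chebyshevRadius S x :=
  le_csSup (bddAbove_image_dist hS x) ⟨s, hs, rfl⟩

theorem chebyshevRadius_le (hne : S.Nonempty) {x : X} {r : ℝ} (h : ∀ s ∈ S, dist x s ≤ r) :
    chebyshevRadius S x ≤ r :=
  csSup_le (hne.image _) (by rintro _ ⟨s, hs, rfl⟩; exact h s hs)

theorem chebyshevRadius_nonneg (S : Set X) (x : X) : 0 ≤ chebyshevRadius S x :=
  Real.sSup_nonneg (by rintro _ ⟨s, -, rfl⟩; exact dist_nonneg)

theorem bddBelow_range_chebyshevRadius (S : Set X) : BddBelow (Set.range (chebyshevRadius S)) :=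
  ⟨0, by rintro _ ⟨x, rfl⟩; exact chebyshevRadius_nonneg S x⟩

theorem lipschitzWith_chebyshevRadius (hne : S.Nonempty) (hS : IsBounded S) :
    LipschitzWith 1 (chebyshevRadius S) :=
  LipschitzWith.of_le_add fun x y => chebyshevRadius_le hne fun s hs =>
    (dist_triangle x y s).trans (by linarith [dist_le_chebyshevRadius hS y hs])

theorem chebyshevRadius_le_of_isometry {T : X → X} (hT : Isometry T) (hne : S.Nonempty)
    (hS : IsBounded S) (hTS : S ⊆ T '' S) (x : X) :
    chebyshevRadius S (T x) ≤ chebyshevRadius S x :=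
  chebyshevRadius_le hne fun s hs => by
    obtain ⟨s', hs', rfl⟩ := hTS hs
    rw [hT.dist_eq]
    exact dist_le_chebyshevRadius hS x hs'

end ChebyshevRadius

section UniformConvex

variable {E : Type*} [NormedAddCommGroup E] [NormedSpace ℝ E] [UniformConvexSpace E]

/-- Unlike in `exists_forall_closed_ball_dist_add_le_two_mul_sub`, `δ` is uniform in `R ≤ B`. -/
theorem exists_forall_closed_ball_dist_add_le_two_mul_sub_of_le {ε B : ℝ} (hε : 0 < ε)
    (hB : 0 < B) : ∃ δ > 0, ∀ ⦃R : ℝ⦄, R ≤ B → ∀ ⦃x y : E⦄, ‖x‖ ≤ R → ‖y‖ ≤ R →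
      ε ≤ ‖x - y‖ → ‖x + y‖ ≤ 2 * R - δ := by
  obtain ⟨δ, hδ, h⟩ := exists_forall_closed_ball_dist_add_le_two_sub E (div_pos hε hB)
  refine ⟨δ * ε / 2, by positivity, fun R hRB x y hx hy hxy => ?_⟩
  have hεR : ε ≤ 2 * R := hxy.trans ((norm_sub_le x y).trans (by linarith))
  have hR : 0 < R := by linarith
  have hR' : 0 ≤ R⁻¹ := inv_nonneg.2 hR.le
  have hunit : ∀ z : E, ‖z‖ ≤ R → ‖R⁻¹ • z‖ ≤ 1 := fun z hz => by
    rw [norm_smul_of_nonneg hR', inv_mul_le_one₀ hR]; exact hz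
  have hsep : ε / B ≤ ‖R⁻¹ • x - R⁻¹ • y‖ := by
    rw [← smul_sub, norm_smul_of_nonneg hR', inv_mul_eq_div, div_le_div_iff₀ hB hR]
    nlinarith
  have := h (hunit x hx) (hunit y hy) hsep
  rw [← smul_add, norm_smul_of_nonneg hR', inv_mul_le_iff₀ hR] at this
  nlinarith

variable {S : Set E}

theorem chebyshevRadius_midpoint_le (hne : S.Nonempty) (hS : IsBounded S) {ε B : ℝ} (hε : 0 < ε)
    (hB : 0 < B) : ∃ δ > 0, ∀ ⦃R : ℝ⦄, R ≤ B → ∀ ⦃u v : E⦄, chebyshevRadius S u ≤ R →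
      chebyshevRadius S v ≤ R → ε ≤ dist u v → chebyshevRadius S (midpoint ℝ u v) ≤ R - δ := by
  obtain ⟨δ, hδ, h⟩ := exists_forall_closed_ball_dist_add_le_two_mul_sub_of_le (E := E) hε hB
  refine ⟨δ / 2, by positivity, fun R hRB u v hu hv huv => chebyshevRadius_le hne fun s hs => ?_⟩
  have hsum := h hRB ((dist_eq_norm u s).symm.trans_le ((dist_le_chebyshevRadius hS u hs).trans hu))
    ((dist_eq_norm v s).symm.trans_le ((dist_le_chebyshevRadius hS v hs).trans hv))
    (by rwa [sub_sub_sub_cancel_right, ← dist_eq_norm])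
  have : midpoint ℝ u v - s = (2⁻¹ : ℝ) • ((u - s) + (v - s)) := by
    rw [midpoint_eq_smul_add, invOf_eq_inv]; module
  rw [dist_eq_norm, this, norm_smul_of_nonneg (by norm_num)]
  linarith

theorem dist_lt_of_chebyshevRadius_le (hne : S.Nonempty) (hS : IsBounded S) {ε : ℝ} (hε : 0 < ε) :
    ∃ η > 0, ∀ ⦃u v : E⦄, chebyshevRadius S u ≤ (⨅ x, chebyshevRadius S x) + η →
      chebyshevRadius S v ≤ (⨅ x, chebyshevRadius S x) + η → dist u v < ε := by
  set r₀ := ⨅ x, chebyshevRadius S x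
  obtain ⟨δ, hδ, h⟩ := chebyshevRadius_midpoint_le hne hS hε
    (add_pos_of_nonneg_of_pos (le_ciInf (chebyshevRadius_nonneg S)) one_pos)
  refine ⟨min (δ / 2) 1, by positivity, fun u v hu hv => ?_⟩
  by_contra! huv
  have hmid := h (by linarith [min_le_right (δ / 2) 1]) hu hv huv
  have := ciInf_le (bddBelow_range_chebyshevRadius S) (midpoint ℝ u v)
  linarith [min_le_left (δ / 2) 1]

variable [CompleteSpace E]

/-- The conclusion says that `c` is the unique minimizer of `chebyshevRadius S`. -/
theorem exists_unique_chebyshevCenter (hne : S.Nonempty) (hS : IsBounded S) :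
    ∃ c, ∀ y, chebyshevRadius S y ≤ chebyshevRadius S c → y = c := by
  set r₀ := ⨅ x, chebyshevRadius S x
  obtain ⟨r, -, hr, hmem⟩ :=
    exists_seq_tendsto_sInf (Set.range_nonempty _) (bddBelow_range_chebyshevRadius S)
  choose x hx using hmem
  have hlim : Tendsto (chebyshevRadius S ∘ x) atTop (𝓝 r₀) := by
    rwa [show chebyshevRadius S ∘ x = r from funext hx]
  have hcauchy : CauchySeq x := Metric.cauchySeq_iff'.2 fun ε hε => by
    obtain ⟨η, hη, h⟩ := dist_lt_of_chebyshevRadius_le hne hS hε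
    obtain ⟨N, hN⟩ :=
      eventually_atTop.1 <| hlim.eventually (ge_mem_nhds (lt_add_of_pos_right r₀ hη))
    exact ⟨N, fun n hn => h (hN n hn) (hN N le_rfl)⟩
  obtain ⟨c, hc⟩ := cauchySeq_tendsto_of_complete hcauchy
  have hrc : chebyshevRadius S c = r₀ :=
    tendsto_nhds_unique
      (((lipschitzWith_chebyshevRadius hne hS).continuous.tendsto c).comp hc) hlim
  refine ⟨c, fun y hy => ?_⟩
  by_contra hyc
  obtain ⟨η, hη, h⟩ := dist_lt_of_chebyshevRadius_le hne hS (dist_pos.2 hyc)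
  exact (h (by linarith) (by linarith)).false

theorem exists_isFixedPt_of_isometry_of_subset_image (hne : S.Nonempty) (hS : IsBounded S)
    {ι : Type*} {T : ι → E → E} (hT : ∀ i, Isometry (T i)) (hTS : ∀ i, S ⊆ T i '' S) :
    ∃ c, ∀ i, IsFixedPt (T i) c := by
  obtain ⟨c, hc⟩ := exists_unique_chebyshevCenter hne hS
  exact ⟨c, fun i => hc _ (chebyshevRadius_le_of_isometry (hT i) hne hS (hTS i) c)⟩

end UniformConvex

theorem isCocycle_coboundary {Γ E : Type*} [Group Γ] [NormedAddCommGroup E] [NormedSpace ℝ E]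
    (ρ : Γ →* (E ≃ₗᵢ[ℝ] E)) (x : E) : IsCocycle ρ (fun g => x - ρ g x) :=
  fun g g' => by simp only [map_mul, LinearIsometryEquiv.coe_mul, comp_apply, map_sub]; abel

namespace IsCocycle

variable {Γ E : Type*} [Group Γ] [NormedAddCommGroup E] [NormedSpace ℝ E]
  {ρ : Γ →* (E ≃ₗᵢ[ℝ] E)} {G G' : Γ → E}

theorem map_one (hG : IsCocycle ρ G) : G 1 = 0 := by
  simpa using hG 1 1

theorem map_inv (hG : IsCocycle ρ G) (g : Γ) : G g⁻¹ = -ρ g⁻¹ (G g) := by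
  rw [eq_neg_iff_add_eq_zero, ← hG, inv_mul_cancel, hG.map_one]

def eqLocus (hG : IsCocycle ρ G) (hG' : IsCocycle ρ G') : Subgroup Γ where
  carrier := {g | G g = G' g}
  one_mem' := hG.map_one.trans hG'.map_one.symm
  mul_mem' {g g'} (hg : G g = G' g) (hg' : G g' = G' g') := by
    show G (g * g') = G' (g * g')
    rw [hG, hG', hg, hg']
  inv_mem' {g} (hg : G g = G' g) := by
    show G g⁻¹ = G' g⁻¹
    rw [hG.map_inv, hG'.map_inv, hg]

theorem exists_eq_coboundary_of_isBounded [CompleteSpace E] [UniformConvexSpace E]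
    (hG : IsCocycle ρ G) (H : Subgroup Γ) (hbdd : IsBounded (G '' H)) :
    ∃ x, ∀ h ∈ H, G h = x - ρ h x := by
  have hTS (h : H) : G '' H ⊆ (fun y => ρ h y + G h) '' (G '' H) := by
    rintro _ ⟨g, hg, rfl⟩
    refine ⟨G (h⁻¹ * g), ⟨h⁻¹ * g, H.mul_mem (H.inv_mem h.2) hg, rfl⟩, ?_⟩
    show ρ h (G _) + G h = G g
    rw [add_comm, ← hG, Subgroup.coe_inv, mul_inv_cancel_left]
  obtain ⟨x, hx⟩ := exists_isFixedPt_of_isometry_of_subset_image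
    ((Set.nonempty_of_mem H.one_mem).image G) hbdd (T := fun (h : H) y => ρ h y + G h)
    (fun h => (IsometryEquiv.addRight (G h)).isometry.comp (ρ h).isometry) hTS
  exact ⟨x, fun h hh => eq_sub_of_add_eq' (hx ⟨h, hh⟩)⟩

end IsCocycle

namespace Subgroup

variable {Γ : Type*} [Group Γ]

theorem closure_pair_pow_le_of_dvd (x y : Γ) {m n : ℕ} (h : m ∣ n) :
    closure {x ^ n, y} ≤ closure {x ^ m, y} := by
  obtain ⟨k, rfl⟩ := h
  rw [closure_le, Set.insert_subset_iff, Set.singleton_subset_iff, pow_mul]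
  exact ⟨pow_mem (subset_closure (Set.mem_insert _ _)) k, subset_closure (by simp)⟩

theorem closure_pair_sq_sup_closure_pair_pow_three (x y : Γ) :
    closure {x ^ 2, y} ⊔ closure {x ^ 3, y} = closure {x, y} := by
  refine le_antisymm (sup_le ?_ ?_) ?_
  · simpa using closure_pair_pow_le_of_dvd x y (one_dvd 2)
  · simpa using closure_pair_pow_le_of_dvd x y (one_dvd 3)
  rw [closure_le, Set.insert_subset_iff, Set.singleton_subset_iff]
  have h2 : x ^ 2 ∈ closure {x ^ 2, y} ⊔ closure {x ^ 3, y} :=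
    mem_sup_left (subset_closure (Set.mem_insert _ _))
  have h3 : x ^ 3 ∈ closure {x ^ 2, y} ⊔ closure {x ^ 3, y} :=
    mem_sup_right (subset_closure (Set.mem_insert _ _))
  refine ⟨?_, mem_sup_left (subset_closure (by simp))⟩
  simpa [pow_succ] using mul_mem h3 (inv_mem h2)

end Subgroup

namespace FreeGroup

variable {α : Type*} [DecidableEq α]

theorem toWord_mk_pow_mul {x : α × Bool} {w : FreeGroup α}
    (hw : w.toWord.head? ≠ some (x.1, !x.2)) (n : ℕ) :
    (mk [x] ^ n * w).toWord = List.replicate n x ++ w.toWord := by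
  have hpow : (mk [x] ^ n).toWord = List.replicate n x := by
    rw [pow_mk, List.flatten_replicate_singleton, toWord_mk, reduce_replicate]
  rw [toWord_mul, hpow]
  refine IsReduced.reduce_eq (List.isChain_append.2 ⟨List.isChain_replicate_of_rel _ fun _ => rfl,
    isReduced_toWord, fun a ha b hb hab => ?_⟩)
  obtain rfl : a = x := List.eq_of_mem_replicate (List.mem_of_mem_getLast? ha)
  by_contra h
  refine hw (Option.mem_def.1 hb ▸ congrArg some (Prod.ext hab.symm ?_))
  exact Bool.eq_not.2 (Ne.symm h)

theorem head?_toWord_mk_pow_mul {x : α × Bool} {w : FreeGroup α}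
    (hw : w.toWord.head? ≠ some (x.1, !x.2)) {n : ℕ} (hn : n ≠ 0) :
    (mk [x] ^ n * w).toWord.head? = some x := by
  rw [toWord_mk_pow_mul hw, List.head?_append, List.head?_replicate, if_neg hn]
  rfl

theorem injective_lift_of_pow [Nontrivial α] {n : α → ℕ} (hn : ∀ i, n i ≠ 0) :
    Injective (lift fun i => of i ^ n i) := by
  let startsWith (x : α × Bool) : Set (FreeGroup α) := {w | w.toWord.head? = some x}
  have hdisj {x y : α × Bool} (hxy : x ≠ y) : Disjoint (startsWith x) (startsWith y) :=
    Set.disjoint_left.2 fun w hx hy => hxy (Option.some_injective _ (hx.symm.trans hy))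
  refine injective_lift_of_ping_pong _
    (fun i => startsWith (i, true)) (fun i => startsWith (i, false)) (fun i => ⟨of i, rfl⟩)
    (fun i j hij => hdisj (by simpa using hij)) (fun i j hij => hdisj (by simpa using hij))
    (fun i j => hdisj (by simp)) ?_ ?_
  · rintro i _ ⟨w, hw, rfl⟩
    exact head?_toWord_mk_pow_mul (x := (i, true)) hw (hn i)
  · rintro i _ ⟨w, hw, rfl⟩
    have : (of i ^ n i)⁻¹ = mk [(i, false)] ^ n i := by rw [← inv_pow]; rfl
    simp only [Pi.inv_apply, smul_eq_mul, this]
    exact head?_toWord_mk_pow_mul (x := (i, false)) hw (hn i)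

end FreeGroup

theorem closure_fa_fb_eq_top : Subgroup.closure {fa, fb} = ⊤ := by
  rw [← FreeGroup.closure_range_of]
  congr 1
  ext w
  simp [or_comm]

/-- a cocycle for a unitary representation of F₂ on a uniformly convex
real Banach space that is bounded on the subgroups ⟨a²,b⟩ and ⟨a³,b⟩ is either bounded
on all of F₂, or else some rank-two free subgroup F of F₂ has a nonzero ρ(F)-fixed
vector. -/
theorem stmt6 {E : Type*} [NormedAddCommGroup E] [NormedSpace ℝ E]
    [CompleteSpace E] [UniformConvexSpace E]
    (ρ : F2 →* (E ≃ₗᵢ[ℝ] E)) (G : F2 → E) (hG : IsCocycle ρ G)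
    (h2 : ∃ C : ℝ, ∀ g ∈ Subgroup.closure {fa ^ 2, fb}, ‖G g‖ ≤ C)
    (h3 : ∃ C : ℝ, ∀ g ∈ Subgroup.closure {fa ^ 3, fb}, ‖G g‖ ≤ C) :
    (∃ C : ℝ, ∀ g : F2, ‖G g‖ ≤ C) ∨
    (∃ F : Subgroup F2, IsRankTwoFree F ∧
      ∃ e : E, e ≠ 0 ∧ ∀ h ∈ F, ρ h e = e) := by
  have hbdd {H : Subgroup F2} (h : ∃ C : ℝ, ∀ g ∈ H, ‖G g‖ ≤ C) : IsBounded (G '' H) :=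
    isBounded_iff_forall_norm_le.2 (h.imp fun _ hC => Set.forall_mem_image.2 hC)
  obtain ⟨x₂, hx₂⟩ := hG.exists_eq_coboundary_of_isBounded _ (hbdd h2)
  obtain ⟨x₃, hx₃⟩ := hG.exists_eq_coboundary_of_isBounded _ (hbdd h3)
  by_cases hx : x₂ = x₃
  · subst hx
    have hK : ⊤ ≤ hG.eqLocus (isCocycle_coboundary ρ x₂) := by
      rw [← closure_fa_fb_eq_top, ← Subgroup.closure_pair_sq_sup_closure_pair_pow_three]
      exact sup_le hx₂ hx₃
    refine .inl ⟨2 * ‖x₂‖, fun g => ?_⟩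
    calc ‖G g‖ = ‖x₂ - ρ g x₂‖ := by rw [hK (Subgroup.mem_top g)]
      _ ≤ ‖x₂‖ + ‖ρ g x₂‖ := norm_sub_le _ _
      _ = 2 * ‖x₂‖ := by rw [LinearIsometryEquiv.norm_map, two_mul]
  · refine .inr ⟨Subgroup.closure {fa ^ 6, fb}, ⟨fa ^ 6, fb, rfl, ?_⟩, x₂ - x₃, sub_ne_zero.2 hx,
      fun h hh => ?_⟩
    · have hgen : (fun t : Bool => if t then fa ^ 6 else fb) =
          fun t => FreeGroup.of t ^ (if t then 6 else 1) := by
        funext t; cases t <;> simp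
      rw [hgen]
      exact FreeGroup.injective_lift_of_pow (by decide)
    · have e₂ := hx₂ h (Subgroup.closure_pair_pow_le_of_dvd _ _ (by norm_num) hh)
      have e₃ := hx₃ h (Subgroup.closure_pair_pow_le_of_dvd _ _ (by norm_num) hh)
      rw [map_sub]
      linear_combination (norm := module) e₂ - e₃
end

section
/- Let ρ be a unitary representation of a group G on a normed real vector space E and let K be a finite normal subgroup of G. Define π : E → E by π(x) = |K|⁻¹ Σ_{k∈K} ρ(k)x; the image of π lies in the subspace E' of ρ(K)-invariant vectors, and π commutes with ρ(g) for every g ∈ G. Then for every quasi-cocycle H : G → E, the composition π∘H is a quasi-cocycle taking values in E', it satisfies sup_{g∈G} ‖H(g) − π(H(g))‖ < ∞, and if H is a cocycle then π∘H is a cocycle. -/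
/-!
Since K is normal, averaging over ρ(K) commutes with ρ, and being an average of isometric images
it is a contraction; hence it preserves cocycles and does not increase the defect of a
quasi-cocycle. For the distance, writing kg = g(g⁻¹kg) in the quasi-cocycle inequality shows that
every ρ(k)H(g), k ∈ K, lies within 2Δ(H) + 2 max_K ‖H‖ of H(g), and an average of points of a ball
stays in that ball.
-/

open scoped BigOperators

/-- The averaging projection π(x) = |K|⁻¹ Σ_{k∈K} ρ(k)x over a finite subgroup K. -/
noncomputable def avgProj {G E : Type*} [Group G] [NormedAddCommGroup E]
    [NormedSpace ℝ E] (ρ : G →* (E ≃ₗᵢ[ℝ] E)) (K : Subgroup G) [Fintype K]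
    (x : E) : E :=
  (Nat.card K : ℝ)⁻¹ • ∑ k : K, ρ (k : G) x

open Metric

section

variable {G E : Type*} [Group G] [NormedAddCommGroup E] [NormedSpace ℝ E]
  (ρ : G →* (E ≃ₗᵢ[ℝ] E))

lemma map_mul_apply (g h : G) (x : E) : ρ (g * h) x = ρ g (ρ h x) := by
  rw [map_mul, LinearIsometryEquiv.coe_mul, Function.comp_apply]

lemma norm_sub_map_apply_le_of_defect_le {H : G → E} {C : ℝ}
    (hC : ∀ g g' : G, ‖H (g * g') - H g - ρ g (H g')‖ ≤ C) (g k : G) :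
    ‖H g - ρ k (H g)‖ ≤ 2 * C + ‖H k‖ + ‖H (g⁻¹ * k * g)‖ := by
  set h := g⁻¹ * k * g
  have hkg : g * h = k * g := by simp only [h, mul_assoc, mul_inv_cancel_left]
  have hk := hC k g
  have hg := hC g h
  rw [hkg] at hg
  calc ‖H g - ρ k (H g)‖
      = ‖(H (k * g) - H k - ρ k (H g)) - (H (k * g) - H g - ρ g (H h)) + (H k - ρ g (H h))‖ := by
        congr 1; abel
    _ ≤ ‖H (k * g) - H k - ρ k (H g)‖ + ‖H (k * g) - H g - ρ g (H h)‖ + (‖H k‖ + ‖ρ g (H h)‖) :=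
        (norm_add_le _ _).trans (add_le_add (norm_sub_le _ _) (norm_sub_le _ _))
    _ ≤ 2 * C + ‖H k‖ + ‖H h‖ := by
        rw [LinearIsometryEquiv.norm_map]; linarith

variable {K : Subgroup G} [Fintype K]

lemma avgProj_add (x y : E) : avgProj ρ K (x + y) = avgProj ρ K x + avgProj ρ K y := by
  simp only [avgProj, map_add, Finset.sum_add_distrib, smul_add]

lemma avgProj_sub (x y : E) : avgProj ρ K (x - y) = avgProj ρ K x - avgProj ρ K y := by
  simp only [avgProj, map_sub, Finset.sum_sub_distrib, smul_sub]

lemma avgProj_mem_closedBall {x c : E} {r : ℝ} (h : ∀ k ∈ K, ρ k x ∈ closedBall c r) :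
    avgProj ρ K x ∈ closedBall c r := by
  have hcard : (0 : ℝ) < Nat.card K := by exact_mod_cast Nat.card_pos
  rw [avgProj, Finset.smul_sum]
  refine (convex_closedBall c r).sum_mem (fun _ _ => by positivity) ?_ fun k _ => h k k.2
  rw [Finset.sum_const, Finset.card_univ, ← Nat.card_eq_fintype_card, nsmul_eq_mul,
    mul_inv_cancel₀ hcard.ne']

lemma norm_avgProj_le (x : E) : ‖avgProj ρ K x‖ ≤ ‖x‖ :=
  mem_closedBall_zero_iff.1 <| avgProj_mem_closedBall ρ fun k _ => by simp

lemma map_avgProj_of_mem (x : E) {k : G} (hk : k ∈ K) :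
    ρ k (avgProj ρ K x) = avgProj ρ K x := by
  rw [avgProj, map_smul, map_sum]
  congr 1
  exact Fintype.sum_equiv (Equiv.mulLeft ⟨k, hk⟩) _ _ fun j => (map_mul_apply ρ _ _ _).symm

lemma avgProj_map (hK : K.Normal) (g : G) (x : E) :
    avgProj ρ K (ρ g x) = ρ g (avgProj ρ K x) := by
  rw [avgProj, avgProj, map_smul, map_sum]
  congr 1
  have := hK
  refine Fintype.sum_equiv (MulAut.conjNormal g⁻¹).toEquiv _ _ fun k => ?_
  simp only [MulEquiv.toEquiv_eq_coe, MulEquiv.coe_toEquiv, MulAut.conjNormal_apply, inv_inv,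
    ← map_mul_apply, mul_assoc, mul_inv_cancel_left]

variable {ρ} {H : G → E}

lemma IsQuasiCocycle.comp_avgProj (hK : K.Normal) (hH : IsQuasiCocycle ρ H) :
    IsQuasiCocycle ρ fun g => avgProj ρ K (H g) := by
  obtain ⟨C, hC⟩ := hH
  refine ⟨C, fun g g' => ?_⟩
  rw [← avgProj_map ρ hK, ← avgProj_sub, ← avgProj_sub]
  exact (norm_avgProj_le ρ _).trans (hC g g')

lemma IsQuasiCocycle.exists_norm_sub_avgProj_le (hK : K.Normal) (hH : IsQuasiCocycle ρ H) :
    ∃ C : ℝ, ∀ g : G, ‖H g - avgProj ρ K (H g)‖ ≤ C := by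
  obtain ⟨C, hC⟩ := hH
  obtain ⟨M, hM⟩ := (Set.finite_range fun k : K => ‖H k‖).bddAbove
  have hHK : ∀ k ∈ K, ‖H k‖ ≤ M := fun k hk => hM ⟨⟨k, hk⟩, rfl⟩
  refine ⟨2 * C + 2 * M, fun g => ?_⟩
  rw [← dist_eq_norm, dist_comm, ← mem_closedBall]
  refine avgProj_mem_closedBall ρ fun k hk => ?_
  have hconj : g⁻¹ * k * g ∈ K := by simpa using hK.conj_mem k hk g⁻¹
  rw [mem_closedBall, dist_eq_norm, norm_sub_rev]
  linarith [norm_sub_map_apply_le_of_defect_le ρ hC g k, hHK k hk, hHK _ hconj]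

lemma IsCocycle.comp_avgProj (hK : K.Normal) (hH : IsCocycle ρ H) :
    IsCocycle ρ fun g => avgProj ρ K (H g) := fun g g' => by
  simp only [hH g g', avgProj_add, avgProj_map ρ hK]

end

/-- for a finite normal subgroup K, the averaging projection π takes
values in the subspace of ρ(K)-invariant vectors and commutes with every ρ(g); for
every quasi-cocycle H the map π∘H is a quasi-cocycle into that subspace at uniformly
bounded distance from H, and π∘H is a cocycle whenever H is. -/
theorem stmt9 {G E : Type*} [Group G] [NormedAddCommGroup E] [NormedSpace ℝ E]
    (ρ : G →* (E ≃ₗᵢ[ℝ] E)) (K : Subgroup G) [Fintype K] (hK : K.Normal) :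
    (∀ x : E, ∀ k ∈ K, ρ k (avgProj ρ K x) = avgProj ρ K x) ∧
    (∀ (g : G) (x : E), avgProj ρ K (ρ g x) = ρ g (avgProj ρ K x)) ∧
    ∀ H : G → E, IsQuasiCocycle ρ H →
      IsQuasiCocycle ρ (fun g => avgProj ρ K (H g)) ∧
      (∃ C : ℝ, ∀ g : G, ‖H g - avgProj ρ K (H g)‖ ≤ C) ∧
      (IsCocycle ρ H → IsCocycle ρ (fun g => avgProj ρ K (H g))) :=
  ⟨fun x _ hk => map_avgProj_of_mem ρ x hk, avgProj_map ρ hK, fun _ hH =>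
    ⟨hH.comp_avgProj hK, hH.exists_norm_sub_avgProj_le hK, fun hc => hc.comp_avgProj hK⟩⟩
end

section
/- Let ρ be a unitary representation of a group G on a normed real vector space E, let K be a finite normal subgroup of G, let E' ⊆ E be the subspace of ρ(K)-invariant vectors, and let ρ' be the unitary representation of G on E' obtained by restricting ρ. Then the natural map ~QC(G;ρ') → ~QC(G;ρ), sending the class of a quasi-cocycle H' : G → E' to its class as a quasi-cocycle into E, is a linear isomorphism. -/
/-!
Averaging over the finite group `K`, `P x = |K|⁻¹ ∑_{k ∈ K} ρ(k) x`, is a linear map of norm at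
most one onto the `ρ(K)`-invariant vectors `E'` which fixes `E'` pointwise and, as `K` is normal,
commutes with every `ρ(g)`. Hence `P` sends bounded maps, cocycles and quasi-cocycles into the
corresponding `E'`-valued objects, which gives injectivity. For surjectivity it remains to see
that `P ∘ H - H` is bounded for a quasi-cocycle `H`: if `k ∈ K` then `k g = g k'` with `k' ∈ K`,
and the quasi-cocycle relation at `(g, k')` and at `(k, g)` bounds `‖ρ(k) H(g) - H(g)‖` by
`2 Δ(H) + ‖H k‖ + ‖H k'‖`, uniformly in `g` since `K` is finite.
-/

open scoped BigOperators

/-- A uniformly bounded family of vectors. -/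
def IsBdd {X E : Type*} [NormedAddCommGroup E] (B : X → E) : Prop :=
  ∃ M : ℝ, ∀ x : X, ‖B x‖ ≤ M

/-- `H` represents the zero class in ~QC(G;ρ), i.e. it lies in the span of bounded
functions and cocycles (equivalently it is a bounded perturbation of a cocycle). -/
def IsTrivialClass {G E : Type*} [Group G] [NormedAddCommGroup E] [NormedSpace ℝ E]
    (ρ : G →* (E ≃ₗᵢ[ℝ] E)) (H : G → E) : Prop :=
  ∃ B C : G → E, IsBdd B ∧ IsCocycle ρ C ∧ H = B + C

section Average

variable {ι E : Type*} [NormedAddCommGroup E] [NormedSpace ℝ E] [Fintype ι] [Nonempty ι]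

lemma inv_card_smul_sum_const (x : E) : (Fintype.card ι : ℝ)⁻¹ • ∑ _i : ι, x = x := by
  rw [Finset.sum_const, Finset.card_univ, ← Nat.cast_smul_eq_nsmul ℝ, smul_smul,
    inv_mul_cancel₀ (Nat.cast_ne_zero.mpr Fintype.card_ne_zero), one_smul]

lemma norm_inv_card_smul_sum_le {v : ι → E} {D : ℝ} (h : ∀ i, ‖v i‖ ≤ D) :
    ‖(Fintype.card ι : ℝ)⁻¹ • ∑ i, v i‖ ≤ D := by
  have hcard : (0 : ℝ) < Fintype.card ι := by exact_mod_cast Fintype.card_pos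
  have hsum : ‖∑ i, v i‖ ≤ Fintype.card ι * D := by
    simpa using norm_sum_le_of_le Finset.univ fun i _ => h i
  rw [norm_smul, norm_inv, Real.norm_natCast, inv_mul_le_iff₀ hcard]
  exact hsum

end Average

section AverageMap

variable {G E : Type*} [Group G] [NormedAddCommGroup E] [NormedSpace ℝ E]
  (ρ : G →* (E ≃ₗᵢ[ℝ] E)) (K : Subgroup G) [Fintype K]

noncomputable def averageMap : E →ₗ[ℝ] E :=
  (Fintype.card K : ℝ)⁻¹ • ∑ k : K, (ρ k).toLinearEquiv.toLinearMap

variable {ρ K}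

lemma averageMap_apply (x : E) :
    averageMap ρ K x = (Fintype.card K : ℝ)⁻¹ • ∑ k : K, ρ k x := by
  simp [averageMap, LinearMap.sum_apply]

lemma norm_averageMap_le (x : E) : ‖averageMap ρ K x‖ ≤ ‖x‖ := by
  rw [averageMap_apply]
  exact norm_inv_card_smul_sum_le fun k => ((ρ k).norm_map x).le

lemma norm_averageMap_sub_le {x : E} {D : ℝ} (h : ∀ k : K, ‖ρ k x - x‖ ≤ D) :
    ‖averageMap ρ K x - x‖ ≤ D := by
  have hx : averageMap ρ K x - x = (Fintype.card K : ℝ)⁻¹ • ∑ k : K, (ρ k x - x) := by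
    rw [Finset.sum_sub_distrib, smul_sub, inv_card_smul_sum_const, averageMap_apply]
  rw [hx]
  exact norm_inv_card_smul_sum_le h

lemma averageMap_eq_self {x : E} (h : ∀ k : K, ρ k x = x) : averageMap ρ K x = x :=
  sub_eq_zero.mp <| norm_le_zero_iff.mp <| norm_averageMap_sub_le fun k => by simp [h k]

lemma apply_averageMap_of_mem {k : G} (hk : k ∈ K) (x : E) :
    ρ k (averageMap ρ K x) = averageMap ρ K x := by
  rw [averageMap_apply, map_smul, map_sum]
  congr 1
  refine Fintype.sum_equiv (Equiv.mulLeft ⟨k, hk⟩) _ _ fun k' => ?_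
  simp [map_mul]

lemma apply_averageMap (hK : K.Normal) (g : G) (x : E) :
    ρ g (averageMap ρ K x) = averageMap ρ K (ρ g x) := by
  rw [averageMap_apply, averageMap_apply, map_smul, map_sum]
  congr 1
  refine Fintype.sum_equiv (MulAut.conjNormal g).toEquiv _ _ fun k => ?_
  simp [map_mul]

end AverageMap

section Cocycles

variable {G E : Type*} [Group G] [NormedAddCommGroup E] [NormedSpace ℝ E]
  {ρ : G →* (E ≃ₗᵢ[ℝ] E)} {K : Subgroup G} [Fintype K]

lemma IsBdd.comp_averageMap {B : G → E} (hB : IsBdd B) : IsBdd fun g => averageMap ρ K (B g) :=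
  let ⟨M, hM⟩ := hB
  ⟨M, fun g => (norm_averageMap_le _).trans (hM g)⟩

lemma IsCocycle.comp_averageMap (hK : K.Normal) {C : G → E} (hC : IsCocycle ρ C) :
    IsCocycle ρ fun g => averageMap ρ K (C g) := fun g g' => by
  dsimp only
  rw [hC g g', map_add, apply_averageMap hK]

lemma IsQuasiCocycle.comp_averageMap (hK : K.Normal) {H : G → E} (hH : IsQuasiCocycle ρ H) :
    IsQuasiCocycle ρ fun g => averageMap ρ K (H g) :=
  let ⟨C, hC⟩ := hH
  ⟨C, fun g g' => by
    rw [apply_averageMap hK, ← map_sub, ← map_sub]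
    exact (norm_averageMap_le _).trans (hC g g')⟩

lemma norm_apply_sub_le_of_mul_eq {H : G → E} {C : ℝ}
    (hC : ∀ g g', ‖H (g * g') - H g - ρ g (H g')‖ ≤ C) {g k k' : G} (hkg : k * g = g * k') :
    ‖ρ k (H g) - H g‖ ≤ 2 * C + ‖H k‖ + ‖H k'‖ := by
  set A := H (g * k') - H g - ρ g (H k')
  set B := H (k * g) - H k - ρ k (H g)
  have hsplit : ρ k (H g) - H g = (A + ρ g (H k')) - (B + H k) := by
    simp only [A, B, hkg]; abel
  calc ‖ρ k (H g) - H g‖ ≤ ‖A + ρ g (H k')‖ + ‖B + H k‖ := hsplit ▸ norm_sub_le _ _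
    _ ≤ (‖A‖ + ‖ρ g (H k')‖) + (‖B‖ + ‖H k‖) := add_le_add (norm_add_le _ _) (norm_add_le _ _)
    _ ≤ 2 * C + ‖H k‖ + ‖H k'‖ := by rw [(ρ g).norm_map]; linarith [hC g k', hC k g]

lemma IsQuasiCocycle.isBdd_averageMap_sub (hK : K.Normal) {H : G → E}
    (hH : IsQuasiCocycle ρ H) : IsBdd fun g => averageMap ρ K (H g) - H g := by
  obtain ⟨C, hC⟩ := hH
  obtain ⟨M, hM⟩ := (Set.finite_range fun k : K => ‖H k‖).bddAbove
  have hMK : ∀ k ∈ K, ‖H k‖ ≤ M := fun k hk => hM ⟨⟨k, hk⟩, rfl⟩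
  refine ⟨2 * C + M + M, fun g => norm_averageMap_sub_le fun k => ?_⟩
  have hk' : g⁻¹ * k * g ∈ K := by simpa using hK.conj_mem k k.2 g⁻¹
  have := norm_apply_sub_le_of_mul_eq hC (g := g) (k := k) (k' := g⁻¹ * k * g) (by group)
  linarith [hMK k k.2, hMK _ hk']

end Cocycles

section Restriction

variable {G E : Type*} [Group G] [NormedAddCommGroup E] [NormedSpace ℝ E]
  {ρ : G →* (E ≃ₗᵢ[ℝ] E)} {E' : Submodule ℝ E} {ρ' : G →* (E' ≃ₗᵢ[ℝ] E')}
  {f : G → E} (hf : ∀ g, f g ∈ E')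

lemma IsCocycle.codRestrict (hρ' : ∀ (g : G) (x : E'), ((ρ' g x : E') : E) = ρ g (x : E))
    (hC : IsCocycle ρ f) : IsCocycle ρ' fun g => (⟨f g, hf g⟩ : E') := fun g g' =>
  Subtype.ext <| by simpa [hρ'] using hC g g'

lemma IsQuasiCocycle.codRestrict (hρ' : ∀ (g : G) (x : E'), ((ρ' g x : E') : E) = ρ g (x : E))
    (hH : IsQuasiCocycle ρ f) : IsQuasiCocycle ρ' fun g => (⟨f g, hf g⟩ : E') :=
  let ⟨C, hC⟩ := hH
  ⟨C, fun g g' => by simpa [← Submodule.norm_coe, hρ'] using hC g g'⟩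

end Restriction

/-- for a finite normal subgroup K of G, with E' the subspace of
ρ(K)-invariant vectors and ρ' the restriction of ρ to E', the natural map
~QC(G;ρ') → ~QC(G;ρ) (induced by postcomposing quasi-cocycles with E' ↪ E) is a
linear isomorphism; stated elementarily as injectivity and surjectivity of the
induced map on classes (linearity being automatic). -/
theorem stmt10 {G E : Type*} [Group G] [NormedAddCommGroup E] [NormedSpace ℝ E]
    (ρ : G →* (E ≃ₗᵢ[ℝ] E)) (K : Subgroup G) [Fintype K] (hK : K.Normal)
    (E' : Submodule ℝ E) (hE' : ∀ x : E, x ∈ E' ↔ ∀ k ∈ K, ρ k x = x)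
    (ρ' : G →* (E' ≃ₗᵢ[ℝ] E')) (hρ' : ∀ (g : G) (x : E'), ((ρ' g x : E') : E) = ρ g (x : E)) :
    -- injectivity of the induced map on ~QC
    (∀ H' : G → E', IsQuasiCocycle ρ' H' →
        IsTrivialClass ρ (fun g => (H' g : E)) → IsTrivialClass ρ' H') ∧
    -- surjectivity of the induced map on ~QC
    (∀ H : G → E, IsQuasiCocycle ρ H →
        ∃ H' : G → E', IsQuasiCocycle ρ' H' ∧
          IsTrivialClass ρ ((fun g => (H' g : E)) - H)) := by
  have hmem (x : E) : averageMap ρ K x ∈ E' := (hE' _).2 fun k hk => apply_averageMap_of_mem hk x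
  refine ⟨fun H' _ ⟨B, C, hB, hC, hBC⟩ => ?_, fun H hH => ?_⟩
  · refine ⟨fun g => ⟨averageMap ρ K (B g), hmem _⟩, fun g => ⟨averageMap ρ K (C g), hmem _⟩,
      hB.comp_averageMap, (hC.comp_averageMap hK).codRestrict _ hρ', funext fun g => ?_⟩
    have hfix : averageMap ρ K (H' g) = H' g :=
      averageMap_eq_self fun k => (hE' _).1 (H' g).2 k k.2
    ext
    calc (H' g : E) = averageMap ρ K (B g + C g) := hfix ▸ congrArg _ (congrFun hBC g)
      _ = _ := map_add _ _ _
  · refine ⟨fun g => ⟨averageMap ρ K (H g), hmem _⟩, (hH.comp_averageMap hK).codRestrict _ hρ',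
      _, 0, hH.isBdd_averageMap_sub hK, fun _ _ => by simp, by ext; simp⟩
end

section
/- Let G be any group, let ℓ∞(G) be the Banach space of bounded real-valued functions on G with the supremum norm, and let ρ be the regular representation, (ρ(g)f)(x) = f(g⁻¹x). For any quasi-cocycle H : G → ℓ∞(G) with defect Δ(H), define H₀ : G → ℓ∞(G) by H₀(g)(x) = H(x)(x) − H(g⁻¹x)(g⁻¹x). Then H₀ is a cocycle and sup_{g∈G} ‖H(g) − H₀(g)‖_∞ ≤ Δ(H). Consequently every quasi-cocycle for the regular representation on ℓ∞(G) is within uniformly bounded distance of a cocycle, i.e. ~QC(G; ℓ∞(G)) = 0. -/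
open scoped BigOperators ENNReal

/-!
The cocycle is the coboundary `g ↦ d - ρ(g) d` of the diagonal `d x = H(x)(x)`, a function that
need not be bounded, so the cocycle need not be a coboundary in `ℓ∞(G)`. Evaluating the defect of `H`
at the pair `(g, g⁻¹x)` and at the point `x` gives `|H(x)(x) - H(g)(x) - H(g⁻¹x)(g⁻¹x)| ≤ Δ`,
which says exactly that `H(g)` and the coboundary differ by at most `Δ` at `x`.
-/

def regCoboundary {G E : Type*} [Group G] [AddCommGroup E] (d : G → E) (g : G) : G → E :=
  fun x => d x - d (g⁻¹ * x)

theorem regCoboundary_mul {G E : Type*} [Group G] [AddCommGroup E] (d : G → E) (g g' x : G) :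
    regCoboundary d (g * g') x = regCoboundary d g x + regCoboundary d g' (g⁻¹ * x) := by
  simp only [regCoboundary, mul_inv_rev, mul_assoc]
  abel

section RegularRepresentation

variable {G E : Type*} [Group G] [NormedAddCommGroup E] [NormedSpace ℝ E]
  {ρ : G →* (lp (fun _ : G => E) ∞ ≃ₗᵢ[ℝ] lp (fun _ : G => E) ∞)}
  {H : G → lp (fun _ : G => E) ∞} {Δ : ℝ}

theorem norm_apply_sub_regCoboundary_diag_le (hρ : ∀ g f x, ρ g f x = f (g⁻¹ * x))
    (hH : ∀ g g', ‖H (g * g') - H g - ρ g (H g')‖ ≤ Δ) (g x : G) :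
    ‖H g x - regCoboundary (fun y => H y y) g x‖ ≤ Δ := by
  have hdefect := (lp.norm_apply_le_norm ENNReal.top_ne_zero _ x).trans (hH g (g⁻¹ * x))
  simp only [lp.coeFn_sub, Pi.sub_apply, hρ, mul_inv_cancel_left] at hdefect
  calc ‖H g x - regCoboundary (fun y => H y y) g x‖
      = ‖H x x - H g x - H (g⁻¹ * x) (g⁻¹ * x)‖ := by
        rw [← norm_neg]
        congr 1
        simp only [regCoboundary]
        abel
    _ ≤ Δ := hdefect

theorem memℓp_regCoboundary_diag (hρ : ∀ g f x, ρ g f x = f (g⁻¹ * x))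
    (hH : ∀ g g', ‖H (g * g') - H g - ρ g (H g')‖ ≤ Δ) (g : G) :
    Memℓp (regCoboundary (fun y => H y y) g) ∞ := by
  have hnear : Memℓp (⇑(H g) - regCoboundary (fun y => H y y) g) ∞ :=
    memℓp_infty ⟨Δ, by
      rintro _ ⟨x, rfl⟩
      exact norm_apply_sub_regCoboundary_diag_le hρ hH g x⟩
  simpa using (lp.memℓp (H g)).sub hnear

theorem exists_isCocycle_norm_sub_le (hρ : ∀ g f x, ρ g f x = f (g⁻¹ * x))
    (hH : ∀ g g', ‖H (g * g') - H g - ρ g (H g')‖ ≤ Δ) :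
    ∃ H₀ : G → lp (fun _ : G => E) ∞,
      (∀ g x : G, H₀ g x = H x x - H (g⁻¹ * x) (g⁻¹ * x)) ∧
      IsCocycle ρ H₀ ∧ ∀ g : G, ‖H g - H₀ g‖ ≤ Δ := by
  refine ⟨fun g => ⟨_, memℓp_regCoboundary_diag hρ hH g⟩, fun _ _ => rfl, fun g g' => ?_,
    fun g => ?_⟩
  · ext x
    simp only [lp.coeFn_add, Pi.add_apply, hρ]
    exact regCoboundary_mul _ g g' x
  · exact lp.norm_le_of_forall_le ((norm_nonneg _).trans (hH 1 1))
      (norm_apply_sub_regCoboundary_diag_le hρ hH g)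

end RegularRepresentation

/-- for the regular representation of any group G on ℓ∞(G), every
quasi-cocycle H with defect bound Δ admits the explicit cocycle
H₀(g)(x) = H(x)(x) − H(g⁻¹x)(g⁻¹x) with sup_g ‖H(g) − H₀(g)‖∞ ≤ Δ; consequently every
quasi-cocycle is within uniformly bounded distance of a cocycle, i.e.
~QC(G;ℓ∞(G)) = 0. -/
theorem stmt12 {G : Type*} [Group G]
    (ρ : G →* (lp (fun _ : G => ℝ) ∞ ≃ₗᵢ[ℝ] lp (fun _ : G => ℝ) ∞))
    (hρ : ∀ (g : G) (f : lp (fun _ : G => ℝ) ∞) (x : G), (ρ g f) x = f (g⁻¹ * x)) :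
    (∀ (H : G → lp (fun _ : G => ℝ) ∞) (Δ : ℝ),
      (∀ g g' : G, ‖H (g * g') - H g - ρ g (H g')‖ ≤ Δ) →
      ∃ H₀ : G → lp (fun _ : G => ℝ) ∞,
        (∀ g x : G, (H₀ g) x = (H x) x - (H (g⁻¹ * x)) (g⁻¹ * x)) ∧
        IsCocycle ρ H₀ ∧ ∀ g : G, ‖H g - H₀ g‖ ≤ Δ) ∧
    (∀ H : G → lp (fun _ : G => ℝ) ∞, IsQuasiCocycle ρ H →
      ∃ H₀ : G → lp (fun _ : G => ℝ) ∞, IsCocycle ρ H₀ ∧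
        ∃ C : ℝ, ∀ g : G, ‖H g - H₀ g‖ ≤ C) := by
  refine ⟨fun H Δ hH => exists_isCocycle_norm_sub_le hρ hH, fun H ⟨C, hC⟩ => ?_⟩
  obtain ⟨H₀, -, hcocycle, hnear⟩ := exists_isCocycle_norm_sub_le hρ hC
  exact ⟨H₀, hcocycle, C, hnear⟩
end

section
/- Let ρ be a unitary representation of F₂ = ⟨a,b⟩ on a Banach space E and let e ∈ E. Then for every n ≥ 1 the Brooks quasi-cocycle satisfies H_{ab,e}((ab)ⁿ) = (1 + ρ(ab) + ρ(ab)² + ⋯ + ρ(ab)^{n−1})e, so (1 − ρ(ab)) H_{ab,e}((ab)ⁿ) = e − ρ(ab)ⁿ e. Consequently, if the operator 1 − ρ(ab) : E → E has a continuous inverse T, then ‖H_{ab,e}((ab)ⁿ)‖ ≤ 2 ‖T‖ · ‖e‖ for all n, i.e. H_{ab,e} is bounded on the powers of ab. -/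
open scoped BigOperators

/-!
If `w` is spelled by two letters on distinct generators, the reduced word of `wⁿ` is `w` repeated
`n` times. Its letters are those of `w`, so the first letter of `w⁻¹` never occurs and `w⁻¹` has
no occurrence, while `w` occurs exactly at the even positions `2k`, preceded by `wᵏ`. Hence
`H_{w,e}(wⁿ) = Σ_{k<n} ρ(w)ᵏ e`, which `1 - ρ(w)` telescopes to `e - ρ(w)ⁿ e`; applying `T`
gives the bound `‖T‖ (‖e‖ + ‖ρ(w)ⁿ e‖) = 2 ‖T‖ ‖e‖`.
-/

namespace List

variable {β : Type*}

theorem drop_mul_length_flatten_replicate (L : List β) {k n : ℕ} (hk : k ≤ n) :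
    (replicate n L).flatten.drop (k * L.length) = (replicate (n - k) L).flatten := by
  obtain ⟨m, rfl⟩ := Nat.exists_eq_add_of_le hk
  rw [replicate_add, flatten_append, drop_left' (by simp), Nat.add_sub_cancel_left]

theorem take_mul_length_flatten_replicate (L : List β) {k n : ℕ} (hk : k ≤ n) :
    (replicate n L).flatten.take (k * L.length) = (replicate k L).flatten := by
  obtain ⟨m, rfl⟩ := Nat.exists_eq_add_of_le hk
  rw [replicate_add, flatten_append, take_left' (by simp)]

end List

theorem Finset.sum_range_two_mul {M : Type*} [AddCommMonoid M] (f : ℕ → M) (n : ℕ) :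
    ∑ i ∈ Finset.range (2 * n), f i = ∑ k ∈ Finset.range n, (f (2 * k) + f (2 * k + 1)) := by
  induction n with
  | zero => simp
  | succ n ih =>
    rw [Nat.mul_succ, Finset.sum_range_succ, Finset.sum_range_succ, ih, Finset.sum_range_succ,
      add_assoc]

namespace FreeGroup

theorem toWord_pow_of_isCyclicallyReduced {α : Type*} [DecidableEq α] {g : FreeGroup α}
    (hg : FreeGroup.IsCyclicallyReduced g.toWord) (n : ℕ) :
    (g ^ n).toWord = (List.replicate n g.toWord).flatten := by
  conv_lhs => rw [← mk_toWord (x := g)]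
  rw [pow_mk, toWord_mk, (hg.flatten_replicate n).isReduced.reduce_eq]

theorem isCyclicallyReduced_pair {α : Type*} {x y : α × Bool} (hxy : x.1 ≠ y.1) :
    FreeGroup.IsCyclicallyReduced [x, y] := by
  simp [isCyclicallyReduced_iff, IsReduced, hxy, Ne.symm hxy]

end FreeGroup

theorem brooks_pow_of_toWord_eq_pair {E : Type*} [NormedAddCommGroup E] [NormedSpace ℝ E]
    (ρ : F2 →* (E ≃ₗᵢ[ℝ] E)) (e : E) {w : F2}
    {x y : Bool × Bool} (hw : w.toWord = [x, y]) (hxy : x.1 ≠ y.1) (n : ℕ) :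
    brooks ρ w e (w ^ n) = ∑ k ∈ Finset.range n, ρ (w ^ k) e := by
  set W := (List.replicate n [x, y]).flatten
  have hW : (w ^ n).toWord = W := by
    rw [FreeGroup.toWord_pow_of_isCyclicallyReduced (hw ▸ FreeGroup.isCyclicallyReduced_pair hxy),
      hw]
  have h2 : [x, y].length = 2 := rfl
  have hlen : W.length = 2 * n := by simp [W, mul_comm]
  have hdrop {k : ℕ} (hk : k < n) :
      W.drop (2 * k) = x :: y :: (List.replicate (n - k - 1) [x, y]).flatten := by
    rw [mul_comm, ← h2, List.drop_mul_length_flatten_replicate _ hk.le,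
      show n - k = n - k - 1 + 1 by omega, List.replicate_succ, List.flatten_cons]
    rfl
  have hinv_not_mem : (y.1, !y.2) ∉ W := by
    simp only [W, List.mem_flatten, List.mem_replicate]
    rintro ⟨_, ⟨-, rfl⟩, h⟩
    rcases List.mem_pair.mp h with h | h
    · exact hxy (congrArg Prod.fst h).symm
    · exact Bool.not_ne_self y.2 (congrArg Prod.snd h)
  have hinv : w⁻¹.toWord = [(y.1, !y.2), (x.1, !x.2)] := by
    rw [FreeGroup.toWord_inv, hw]; rfl
  unfold brooks
  rw [hW, hw, hinv, hlen, h2]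
  have hno_inv (j : ℕ) : (W.drop j).take 2 ≠ [(y.1, !y.2), (x.1, !x.2)] := fun h =>
    hinv_not_mem (List.drop_subset _ _ (List.take_subset _ _ (h ▸ List.mem_cons_self)))
  rw [Finset.sum_eq_zero fun j _ => if_neg (hno_inv j), sub_zero, Finset.sum_range_two_mul]
  refine Finset.sum_congr rfl fun k hk => ?_
  have hk : k < n := Finset.mem_range.mp hk
  have hodd : (W.drop (2 * k + 1)).take 2 ≠ [x, y] := by
    rw [← List.drop_drop, hdrop hk, List.drop_one, List.tail_cons, List.take_succ_cons]
    exact fun h => hxy (congrArg Prod.fst (List.cons.inj h).1).symm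
  rw [if_neg hodd, add_zero, hdrop hk, if_pos (by simp), mul_comm,
    ← h2, List.take_mul_length_flatten_replicate _ hk.le, ← hw,
    ← FreeGroup.pow_mk, FreeGroup.mk_toWord]

theorem LinearIsometryEquiv.sum_map_pow_sub_map_sum {G R E : Type*} [Monoid G] [Semiring R]
    [SeminormedAddCommGroup E] [Module R E] (ρ : G →* (E ≃ₗᵢ[R] E)) (g : G) (e : E) (n : ℕ) :
    ∑ i ∈ Finset.range n, ρ (g ^ i) e - ρ g (∑ i ∈ Finset.range n, ρ (g ^ i) e)
      = e - ρ (g ^ n) e := by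
  have hshift (i : ℕ) : ρ g (ρ (g ^ i) e) = ρ (g ^ (i + 1)) e := by
    rw [pow_succ', map_mul]; rfl
  simp only [map_sum, hshift, ← Finset.sum_sub_distrib]
  rw [Finset.sum_range_sub' (fun i => ρ (g ^ i) e), pow_zero, map_one]
  rfl

theorem ContinuousLinearMap.norm_le_of_sub_eq_sub_of_norm_eq {𝕜 E : Type*}
    [NontriviallyNormedField 𝕜] [SeminormedAddCommGroup E] [NormedSpace 𝕜 E] (T : E →L[𝕜] E)
    {U : E → E} (hT : ∀ x, T (x - U x) = x) {x e v : E} (h : x - U x = e - v) (hv : ‖v‖ = ‖e‖) :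
    ‖x‖ ≤ 2 * ‖T‖ * ‖e‖ :=
  calc ‖x‖ = ‖T (e - v)‖ := by rw [← h, hT]
    _ ≤ ‖T‖ * ‖e - v‖ := T.le_opNorm _
    _ ≤ ‖T‖ * (‖e‖ + ‖v‖) := by gcongr; exact norm_sub_le _ _
    _ = 2 * ‖T‖ * ‖e‖ := by rw [hv]; ring

theorem stmt14_general {E : Type*} [NormedAddCommGroup E] [NormedSpace ℝ E]
    (ρ : F2 →* (E ≃ₗᵢ[ℝ] E)) (e : E) :
    (∀ n : ℕ, 1 ≤ n →
      brooks ρ (fa * fb) e ((fa * fb) ^ n)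
        = ∑ i ∈ Finset.range n, ρ ((fa * fb) ^ i) e) ∧
    (∀ n : ℕ, 1 ≤ n →
      brooks ρ (fa * fb) e ((fa * fb) ^ n)
          - ρ (fa * fb) (brooks ρ (fa * fb) e ((fa * fb) ^ n))
        = e - ρ ((fa * fb) ^ n) e) ∧
    (∀ T : E →L[ℝ] E,
      (∀ x : E, T (x - ρ (fa * fb) x) = x) →
      (∀ x : E, T x - ρ (fa * fb) (T x) = x) →
      ∀ n : ℕ, 1 ≤ n →
        ‖brooks ρ (fa * fb) e ((fa * fb) ^ n)‖ ≤ 2 * ‖T‖ * ‖e‖) := by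
  have hab : (fa * fb).toWord = [(true, true), (false, true)] := by decide
  have hbrooks (n : ℕ) := brooks_pow_of_toWord_eq_pair ρ e hab (by decide) n
  have hsub (n : ℕ) :
      brooks ρ (fa * fb) e ((fa * fb) ^ n) - ρ (fa * fb) (brooks ρ (fa * fb) e ((fa * fb) ^ n))
        = e - ρ ((fa * fb) ^ n) e := by
    rw [hbrooks]
    exact LinearIsometryEquiv.sum_map_pow_sub_map_sum ρ _ e n
  exact ⟨fun n _ => hbrooks n, fun n _ => hsub n, fun T hT _ n _ =>
    T.norm_le_of_sub_eq_sub_of_norm_eq hT (hsub n) (LinearIsometryEquiv.norm_map _ _)⟩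

/-- for any unitary representation ρ of F₂ on a Banach space E and any
e ∈ E, the Brooks quasi-cocycle satisfies
H_{ab,e}((ab)ⁿ) = (1 + ρ(ab) + ⋯ + ρ(ab)^{n−1})e, so
(1 − ρ(ab)) H_{ab,e}((ab)ⁿ) = e − ρ(ab)ⁿ e; hence if 1 − ρ(ab) has a continuous
inverse T then ‖H_{ab,e}((ab)ⁿ)‖ ≤ 2‖T‖‖e‖ for all n ≥ 1. -/
theorem stmt14 {E : Type*} [NormedAddCommGroup E] [NormedSpace ℝ E] [CompleteSpace E]
    (ρ : F2 →* (E ≃ₗᵢ[ℝ] E)) (e : E) :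
    (∀ n : ℕ, 1 ≤ n →
      brooks ρ (fa * fb) e ((fa * fb) ^ n)
        = ∑ i ∈ Finset.range n, ρ ((fa * fb) ^ i) e) ∧
    (∀ n : ℕ, 1 ≤ n →
      brooks ρ (fa * fb) e ((fa * fb) ^ n)
          - ρ (fa * fb) (brooks ρ (fa * fb) e ((fa * fb) ^ n))
        = e - ρ ((fa * fb) ^ n) e) ∧
    (∀ T : E →L[ℝ] E,
      (∀ x : E, T (x - ρ (fa * fb) x) = x) →
      (∀ x : E, T x - ρ (fa * fb) (T x) = x) →
      ∀ n : ℕ, 1 ≤ n →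
        ‖brooks ρ (fa * fb) e ((fa * fb) ^ n)‖ ≤ 2 * ‖T‖ * ‖e‖) :=
  stmt14_general ρ e
end
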